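/- Let R be a commutative noetherian ring and S a left noetherian ring which is an R-algebra. Then every injective S-module E admits a family (E_i)_{i ∈ I} of S-submodules such that E is the internal direct sum of the E_i, and each E_i is an injective S-module containing an essential S-submodule that is R-elementary (i.e., each E_i is an injective hull of an R-elementary S-module). -/

import Mathlib

/-- Annihilator in `R` of an `S`-submodule, `R` acting through `algebraMap R S`. -/
def annRS (R : Type*) {S M : Type*} [CommRing R] [Ring S] [Algebra R S]
    [AddCommGroup M] [Module S M] (N : Submodule S M) : Ideal R where
  carrier := {r : R | ∀ x ∈ N, algebraMap R S r • x = 0}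
  zero_mem' := by intro x _; simp
  add_mem' := by
    intro a b ha hb x hx
    rw [map_add, add_smul, ha x hx, hb x hx, add_zero]
  smul_mem' := by
    intro c a ha x hx
    rw [smul_eq_mul, map_mul, mul_smul, ha x hx, smul_zero]

/-- An `R`-elementary object: nonzero, finitely generated, and the `R`-annihilator of
every nonzero subobject equals a fixed prime ideal `p` of `R`. -/
def IsRElem (R : Type*) {S M : Type*} [CommRing R] [Ring S] [Algebra R S]
    [AddCommGroup M] [Module S M] (L : Submodule S M) : Prop :=
  L ≠ ⊥ ∧ L.FG ∧ ∃ p : Ideal R, p.IsPrime ∧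
    ∀ L' : Submodule S M, L' ≤ L → L' ≠ ⊥ → annRS R L' = p

/-!
Over a noetherian `R`, among the nonzero submodules of a nonzero `N` pick one, `L₀`, whose
annihilator is maximal: every nonzero submodule of `L₀` has the same annihilator, which is
therefore prime, and a cyclic submodule of `L₀` is `R`-elementary. Inside an injective module a
maximal essential extension of a submodule is injective, i.e. an injective hull. By Zorn's lemma
take a maximal independent family of injective hulls of `R`-elementary submodules of `E`. As `S`
is left noetherian, the sum `F` of the family is injective: a map from a submodule of a cyclic
module has finitely generated image, which lies in finitely many summands, so Baer's argument
goes through. Hence `F` has a complement, and if `F ≠ E` the hull of an `R`-elementary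
submodule of this complement would enlarge the family.
-/

universe v

open Submodule

namespace Module.Injective

variable {S : Type*} [Ring S]

theorem of_leftInverse {N P : Type v} [AddCommGroup N] [Module S N] [AddCommGroup P] [Module S P]
    [Module.Injective S P] (s : N →ₗ[S] P) (r : P →ₗ[S] N) (h : ∀ x, r (s x) = x) :
    Module.Injective S N where
  out X Y _ _ _ _ i hi f := by
    obtain ⟨g, hg⟩ := Module.Injective.out i hi (s ∘ₗ f)
    exact ⟨r ∘ₗ g, fun x => by simp [hg, h]⟩

instance prod {N P : Type v} [AddCommGroup N] [Module S N] [AddCommGroup P] [Module S P]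
    [Module.Injective S N] [Module.Injective S P] : Module.Injective S (N × P) where
  out X Y _ _ _ _ i hi f := by
    obtain ⟨g₁, hg₁⟩ := Module.Injective.out i hi (LinearMap.fst S N P ∘ₗ f)
    obtain ⟨g₂, hg₂⟩ := Module.Injective.out i hi (LinearMap.snd S N P ∘ₗ f)
    exact ⟨g₁.prod g₂, fun x => Prod.ext (hg₁ x) (hg₂ x)⟩

instance of_subsingleton {N : Type v} [AddCommGroup N] [Module S N] [Subsingleton N] :
    Module.Injective S N where
  out _ _ _ _ _ _ _ _ _ := ⟨0, fun _ => Subsingleton.elim _ _⟩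

theorem exists_extension_linearPMap {M Q : Type v} [AddCommGroup M] [Module S M]
    [AddCommGroup Q] [Module S Q] [Module.Injective S Q] (f : M →ₗ.[S] Q) :
    ∃ g : M →ₗ[S] Q, ∀ x : f.domain, g x = f x :=
  Module.Injective.out f.domain.subtype f.domain.injective_subtype f.toFun

end Module.Injective

namespace LinearPMap

variable {S M Q : Type*} [Ring S] [AddCommGroup M] [Module S M] [AddCommGroup Q] [Module S Q]

/-- Baer's argument, with cyclic submodules of `M` in place of the ring. -/
theorem exists_extension_of_forall_span_singleton
    (h : ∀ (y : M) (W : Submodule S (span S {y})) (g : W →ₗ[S] Q),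
      ∃ g' : span S {y} →ₗ[S] Q, ∀ w : W, g' w = g w)
    (f : M →ₗ.[S] Q) : ∃ g : M →ₗ[S] Q, ∀ x : f.domain, g x = f x := by
  obtain ⟨m, hfm, hmax⟩ := zorn_le_nonempty₀ Set.univ
    (fun c _ hc _ _ => ⟨_, Set.mem_univ _, fun _ => LinearPMap.le_sSup hc.directedOn⟩) f trivial
  have hdom : m.domain = ⊤ := by
    refine eq_top_iff.2 fun y _ => ?_
    let W : Submodule S (span S {y}) := m.domain.comap (span S {y}).subtype
    obtain ⟨g', hg'⟩ := h y W (m.toFun ∘ₗ (span S {y}).subtype.restrict fun _ hx => hx)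
    have hcompat : ∀ (x : m.domain) (z : span S {y}), (x : M) = z → m x = g' z := by
      intro x z hxz
      have hzW : z ∈ W := show (z : M) ∈ m.domain from hxz ▸ x.2
      rw [hg' ⟨z, hzW⟩]
      exact congrArg m (Subtype.ext hxz)
    have hle := hmax.2 trivial (m.left_le_sup ⟨span S {y}, g'⟩ hcompat)
    exact hle.1 (mem_sup_right (mem_span_singleton_self y))
  refine ⟨m.toFun ∘ₗ (LinearEquiv.ofTop _ hdom).symm.toLinearMap, fun x => ?_⟩
  exact (hfm.2 (x := x) rfl).symm

end LinearPMap

theorem Module.injective_of_forall_extend_span_singleton {S : Type*} [Ring S] {Q : Type v}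
    [AddCommGroup Q] [Module S Q]
    (h : ∀ ⦃M : Type v⦄ [AddCommGroup M] [Module S M] (y : M) (W : Submodule S (span S {y}))
      (g : W →ₗ[S] Q), ∃ g' : span S {y} →ₗ[S] Q, ∀ w : W, g' w = g w) :
    Module.Injective S Q where
  out X Y _ _ _ _ i hi f := by
    let e := LinearEquiv.ofInjective i hi
    obtain ⟨g, hg⟩ := LinearPMap.exists_extension_of_forall_span_singleton (h (M := Y))
      ⟨LinearMap.range i, f ∘ₗ e.symm.toLinearMap⟩
    exact ⟨g, fun x => (hg ⟨i x, LinearMap.mem_range_self i x⟩).trans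
      (congrArg f (hi (LinearEquiv.ofInjective_symm_apply i _)))⟩

namespace Submodule

variable {S M : Type*} [Ring S] [AddCommGroup M] [Module S M]

theorem exists_isCompl_of_injective (N : Submodule S M) [Module.Injective S N] :
    ∃ C : Submodule S M, IsCompl N C := by
  obtain ⟨r, hr⟩ := Module.Injective.out N.subtype N.injective_subtype LinearMap.id
  exact ⟨_, LinearMap.isCompl_of_proj hr⟩

theorem injective_sup {A B : Submodule S M} [Module.Injective S A] [Module.Injective S B]
    (h : Disjoint A B) : Module.Injective S ↥(A ⊔ B) := by
  have hinj : Function.Injective (A.subtype.coprod B.subtype) := by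
    rw [← LinearMap.ker_eq_bot, LinearMap.ker_coprod_of_disjoint_range, ker_subtype, ker_subtype,
      prod_bot]
    rwa [range_subtype, range_subtype]
  let e := (LinearEquiv.ofInjective _ hinj).trans (LinearEquiv.ofEq _ _
    (by rw [LinearMap.range_coprod, range_subtype, range_subtype]))
  exact Module.Injective.of_leftInverse e.symm.toLinearMap e.toLinearMap e.apply_symm_apply

theorem injective_finset_sup {𝒜 : Set (Submodule S M)} (hind : sSupIndep 𝒜)
    (hinj : ∀ N ∈ 𝒜, Module.Injective S N) (t : Finset (Submodule S M)) (ht : ↑t ⊆ 𝒜) :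
    Module.Injective S ↥(t.sup id) := by
  classical
  induction t using Finset.induction_on with
  | empty =>
    rw [Finset.sup_empty]
    exact Module.Injective.of_subsingleton
  | insert a t hat ih =>
    rw [Finset.coe_insert, Set.insert_subset_iff] at ht
    have := hinj a ht.1
    have := ih ht.2
    rw [Finset.sup_insert, id_eq]
    refine injective_sup ?_
    rw [Finset.sup_id_eq_sSup]
    exact hind.disjoint_sSup ht.1 ht.2 hat

theorem _root_.sSupIndep.injective_sSup [IsNoetherianRing S] {𝒜 : Set (Submodule S M)}
    (hind : sSupIndep 𝒜) (hinj : ∀ N ∈ 𝒜, Module.Injective S N) :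
    Module.Injective S ↥(sSup 𝒜) := by
  refine Module.injective_of_forall_extend_span_singleton fun Y _ _ y W g => ?_
  -- `W` is noetherian, so `g` lands in the sup of finitely many members of `𝒜`.
  have hfg := (IsNoetherian.noetherian (⊤ : Submodule S W)).map ((sSup 𝒜).subtype ∘ₗ g)
  obtain ⟨t, ht𝒜, hle⟩ := (CompleteLattice.isCompactElement_iff_exists_le_sSup_of_le_sSup _ _).1
    ((fg_iff_compact _).1 hfg) 𝒜 (by rintro _ ⟨w, -, rfl⟩; exact (g w).2)
  have := injective_finset_sup hind hinj t ht𝒜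
  obtain ⟨g', hg'⟩ := Module.Injective.out W.subtype W.injective_subtype
    (LinearMap.codRestrict _ ((sSup 𝒜).subtype ∘ₗ g)
      fun w => hle (mem_map_of_mem mem_top))
  have hsup : t.sup id ≤ sSup 𝒜 := Finset.sup_le fun N hN => le_sSup (ht𝒜 hN)
  exact ⟨inclusion hsup ∘ₗ g', fun w =>
    Subtype.ext <| show (g' w : M) = g w from congrArg Subtype.val (hg' w)⟩

def IsEssentialIn (L N : Submodule S M) : Prop :=
  L ≤ N ∧ ∀ W ≤ N, W ≠ ⊥ → L ⊓ W ≠ ⊥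

theorem isEssentialIn_iff_smul {L N : Submodule S M} :
    L.IsEssentialIn N ↔ L ≤ N ∧ ∀ x ∈ N, x ≠ 0 → ∃ s : S, s • x ∈ L ∧ s • x ≠ 0 := by
  refine and_congr_right fun _ => ⟨fun h x hx hx0 => ?_, fun h W hW hW0 => ?_⟩
  · have hspan : span S {x} ≠ ⊥ := by rwa [Ne, span_singleton_eq_bot]
    obtain ⟨z, ⟨hzL, hzx⟩, hz0⟩ := (Submodule.ne_bot_iff _).1
      (h _ (span_le.2 (Set.singleton_subset_iff.2 hx)) hspan)
    obtain ⟨s, rfl⟩ := mem_span_singleton.1 hzx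
    exact ⟨s, hzL, hz0⟩
  · obtain ⟨x, hxW, hx0⟩ := (Submodule.ne_bot_iff _).1 hW0
    obtain ⟨s, hsL, hs0⟩ := h x (hW hxW) hx0
    exact (Submodule.ne_bot_iff _).2 ⟨s • x, ⟨hsL, W.smul_mem s hxW⟩, hs0⟩

theorem isEssentialIn_refl (L : Submodule S M) : L.IsEssentialIn L :=
  ⟨le_rfl, fun _ hW hW0 => by rwa [inf_eq_right.2 hW]⟩

theorem IsEssentialIn.trans {L N P : Submodule S M} (hLN : L.IsEssentialIn N)
    (hNP : N.IsEssentialIn P) : L.IsEssentialIn P := by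
  rw [isEssentialIn_iff_smul] at *
  refine ⟨hLN.1.trans hNP.1, fun x hx hx0 => ?_⟩
  obtain ⟨s, hsN, hs0⟩ := hNP.2 x hx hx0
  obtain ⟨t, htL, ht0⟩ := hLN.2 _ hsN hs0
  exact ⟨t * s, by rwa [mul_smul], by rwa [mul_smul]⟩

theorem IsEssentialIn.disjoint_of_disjoint {L N F : Submodule S M} (h : L.IsEssentialIn N)
    (hLF : Disjoint L F) : Disjoint N F := by
  rw [disjoint_iff]
  by_contra hNF
  exact h.2 _ inf_le_left hNF (eq_bot_iff.2 (le_trans (inf_le_inf_left L inf_le_right)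
    (disjoint_iff.1 hLF).le))

theorem exists_maximal_isEssentialIn (L : Submodule S M) :
    ∃ E₀, L.IsEssentialIn E₀ ∧ ∀ N, E₀.IsEssentialIn N → N = E₀ := by
  obtain ⟨E₀, -, hmax⟩ := zorn_le_nonempty₀ {N | L.IsEssentialIn N} (fun c hc hch y hy => by
    refine ⟨sSup c, isEssentialIn_iff_smul.2 ⟨(hc hy).1.trans (le_sSup hy), fun x hx hx0 => ?_⟩,
      fun _ => le_sSup⟩
    obtain ⟨N, hNc, hxN⟩ := (mem_sSup_of_directed ⟨y, hy⟩ hch.directedOn).1 hx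
    exact (isEssentialIn_iff_smul.1 (hc hNc)).2 x hxN hx0) L (isEssentialIn_refl L)
  exact ⟨E₀, hmax.1, fun N hN => le_antisymm (hmax.2 (hmax.1.trans hN) hN.1) hN.1⟩

/-- With `C` maximal among the submodules disjoint from `E₀`, a map `ρ : M → M` that is the
identity on `E₀` and zero on `C` has range an essential extension of `E₀`, so `ρ` is a
retraction onto `E₀`. -/
theorem injective_of_forall_isEssentialIn_eq [Module.Injective S M] {E₀ : Submodule S M}
    (h : ∀ N, E₀.IsEssentialIn N → N = E₀) : Module.Injective S E₀ := by
  obtain ⟨C, -, hC⟩ := zorn_le_nonempty₀ {C | Disjoint C E₀} (fun c hc hch y hy =>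
    ⟨sSup c, hch.directedOn.disjoint_sSup_left.2 hc, fun _ => le_sSup⟩) ⊥ disjoint_bot_left
  let f₀ : M →ₗ.[S] M := ⟨E₀, E₀.subtype⟩
  let f₁ : M →ₗ.[S] M := ⟨C, 0⟩
  have hcompat := f₀.sup_h_of_disjoint f₁ hC.1.symm
  obtain ⟨ρ, hρ⟩ := Module.Injective.exists_extension_linearPMap (f₀.sup f₁ hcompat)
  have hρE₀ : ∀ x ∈ E₀, ρ x = x := fun x hx =>
    (hρ ⟨x, mem_sup_left hx⟩).trans ((f₀.left_le_sup f₁ hcompat).2 (x := ⟨x, hx⟩) rfl).symm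
  have hρC : ∀ x ∈ C, ρ x = 0 := fun x hx =>
    (hρ ⟨x, mem_sup_right hx⟩).trans ((f₀.right_le_sup f₁ hcompat).2 (x := ⟨x, hx⟩) rfl).symm
  have hess : E₀.IsEssentialIn (LinearMap.range ρ) := by
    refine isEssentialIn_iff_smul.2 ⟨fun x hx => ⟨x, hρE₀ x hx⟩, ?_⟩
    rintro _ ⟨m, rfl⟩ hm
    have hmC : m ∉ C := fun hmC => hm (hρC m hmC)
    have hmeet : ¬ Disjoint (C ⊔ span S {m}) E₀ := fun hd =>
      hmC (hC.2 hd le_sup_left (mem_sup_right (mem_span_singleton_self m)))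
    obtain ⟨e, ⟨he, heE₀⟩, he0⟩ := (Submodule.ne_bot_iff _).1 (mt disjoint_iff.2 hmeet)
    obtain ⟨c, hc, _, hz, rfl⟩ := mem_sup.1 he
    obtain ⟨s, rfl⟩ := mem_span_singleton.1 hz
    have hsm : s • ρ m = c + s • m := by
      rw [← map_smul, ← hρE₀ _ heE₀, map_add, hρC c hc, zero_add]
    exact ⟨s, hsm ▸ heE₀, hsm ▸ he0⟩
  have hrange := h _ hess
  exact Module.Injective.of_leftInverse E₀.subtype
    (ρ.codRestrict E₀ fun m => hrange ▸ ⟨m, rfl⟩) fun x => Subtype.ext (hρE₀ x x.2)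

theorem exists_isEssentialIn_injective [Module.Injective S M] (L : Submodule S M) :
    ∃ E₀ : Submodule S M, L.IsEssentialIn E₀ ∧ Module.Injective S E₀ :=
  let ⟨E₀, hLE₀, hmax⟩ := exists_maximal_isEssentialIn L
  ⟨E₀, hLE₀, injective_of_forall_isEssentialIn_eq hmax⟩

end Submodule

section Independent

variable {α : Type*} [CompleteLattice α]

theorem sSupIndep.insert [IsModularLattice α] {s : Set α} {a : α} (hs : sSupIndep s)
    (ha : Disjoint a (sSup s)) : sSupIndep (insert a s) := by
  intro b hb
  by_cases hba : b = a
  · subst hba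
    exact ha.mono_right (sSup_le_sSup fun x hx => hx.1.resolve_left hx.2)
  · have hbs : b ∈ s := hb.resolve_left hba
    have h := (hs hbs).disjoint_sup_right_of_disjoint_sup_left
      (ha.symm.mono_left (sup_le (le_sSup hbs) (sSup_le_sSup Set.sdiff_subset)))
    refine h.mono_right (sSup_le fun x hx => ?_)
    rcases hx.1 with rfl | hxs
    · exact le_sup_right
    · exact le_sup_of_le_left (le_sSup ⟨hxs, hx.2⟩)

theorem exists_maximal_sSupIndep [IsCompactlyGenerated α] (P : α → Prop) :
    ∃ 𝒜 : Set α, Maximal (fun 𝒜 => sSupIndep 𝒜 ∧ ∀ a ∈ 𝒜, P a) 𝒜 := by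
  refine (zorn_le_nonempty₀ {𝒜 : Set α | sSupIndep 𝒜 ∧ ∀ a ∈ 𝒜, P a} (fun c hc hch _ _ => ?_) ∅
    ⟨sSupIndep_empty, fun _ => False.elim⟩).imp fun _ h => h.2
  refine ⟨⋃₀ c, ⟨iSupIndep_sUnion_of_directed hch.directedOn fun 𝒜 h𝒜 => (hc h𝒜).1, ?_⟩,
    fun _ => Set.subset_sUnion_of_mem⟩
  rintro a ⟨𝒜, h𝒜c, ha⟩
  exact (hc h𝒜c).2 a ha

end Independent

section Elementary

variable {R S M : Type*} [CommRing R] [Ring S] [Algebra R S] [AddCommGroup M] [Module S M]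

def LinearMap.algebraMapSMul (b : R) : M →ₗ[S] M where
  toFun x := algebraMap R S b • x
  map_add' := smul_add _
  map_smul' s x := by simp only [RingHom.id_apply, smul_smul, Algebra.commutes]

theorem annRS_anti {N N' : Submodule S M} (h : N ≤ N') : annRS R N' ≤ annRS R N :=
  fun _ hr x hx => hr x (h hx)

theorem annRS_isPrime {L : Submodule S M} (hL : L ≠ ⊥)
    (h : ∀ L' ≤ L, L' ≠ ⊥ → annRS R L' = annRS R L) : (annRS R L).IsPrime where
  ne_top' htop := hL <| (Submodule.eq_bot_iff _).2 fun x hx => by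
    simpa using (htop ▸ Submodule.mem_top : (1 : R) ∈ annRS R L) x hx
  mem_or_mem' {a b} hab := by
    refine or_iff_not_imp_right.2 fun hb => ?_
    let Lb := L.map (LinearMap.algebraMapSMul (S := S) (M := M) b)
    have hLb : Lb ≤ L := by
      rintro _ ⟨x, hx, rfl⟩
      exact L.smul_mem _ hx
    have hLb0 : Lb ≠ ⊥ := by
      obtain ⟨x, hx, hbx⟩ : ∃ x ∈ L, algebraMap R S b • x ≠ 0 := by
        simpa [annRS] using hb
      exact (Submodule.ne_bot_iff _).2 ⟨_, ⟨x, hx, rfl⟩, hbx⟩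
    rw [← h Lb hLb hLb0]
    rintro _ ⟨x, hx, rfl⟩
    change algebraMap R S a • algebraMap R S b • x = 0
    rw [smul_smul, ← map_mul]
    exact hab x hx

theorem exists_isRElem_le [IsNoetherianRing R] {N : Submodule S M} (hN : N ≠ ⊥) :
    ∃ L ≤ N, IsRElem R L := by
  obtain ⟨_, ⟨L₀, ⟨hL₀N, hL₀⟩, rfl⟩, hmax⟩ := set_has_maximal_iff_noetherian.2 inferInstance
    (annRS R '' {L | L ≤ N ∧ L ≠ ⊥}) ⟨_, N, ⟨le_rfl, hN⟩, rfl⟩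
  have hconst : ∀ L' ≤ L₀, L' ≠ ⊥ → annRS R L' = annRS R L₀ := fun L' hL' hL'0 =>
    ((annRS_anti hL').eq_of_not_lt (hmax _ ⟨L', ⟨hL'.trans hL₀N, hL'0⟩, rfl⟩)).symm
  obtain ⟨x, hx, hx0⟩ := (Submodule.ne_bot_iff _).1 hL₀
  have hxL₀ : Submodule.span S {x} ≤ L₀ := Submodule.span_le.2 (Set.singleton_subset_iff.2 hx)
  refine ⟨_, hxL₀.trans hL₀N, by rwa [Ne, Submodule.span_singleton_eq_bot],
    Submodule.fg_span_singleton x, _, annRS_isPrime hL₀ hconst,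
    fun L' hL' hL'0 => hconst L' (hL'.trans hxL₀) hL'0⟩

theorem exists_isRElem_injective_hull_disjoint [IsNoetherianRing R] [Module.Injective S M]
    {F : Submodule S M} [Module.Injective S F] (hF : F ≠ ⊤) :
    ∃ E₀ L : Submodule S M, Module.Injective S E₀ ∧ L.IsEssentialIn E₀ ∧ IsRElem R L ∧
      Disjoint E₀ F := by
  obtain ⟨C, hC⟩ := F.exists_isCompl_of_injective
  obtain ⟨L, hLC, hL⟩ := exists_isRElem_le (R := R) (N := C) fun hC0 =>
    hF (by simpa [hC0] using hC.sup_eq_top)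
  obtain ⟨E₀, hLE₀, hE₀⟩ := Submodule.exists_isEssentialIn_injective L
  exact ⟨E₀, L, hE₀, hLE₀, hL, hLE₀.disjoint_of_disjoint (hC.disjoint.symm.mono_left hLC)⟩

end Elementary

/-- Every injective `S`-module `E` is an internal direct sum of a family of `S`-submodules,
each of which is an injective `S`-module that is an injective hull of an `R`-elementary
object (it contains an essential `R`-elementary `S`-submodule). -/
theorem injective_is_direct_sum_of_injective_hulls_of_elementary
    (R S E : Type*) [CommRing R] [IsNoetherianRing R] [Ring S] [IsNoetherianRing S]
    [Algebra R S] [AddCommGroup E] [Module S E] (hE : Module.Injective S E) :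
    ∃ 𝒜 : Set (Submodule S E),
      sSup 𝒜 = ⊤ ∧
      (∀ E' ∈ 𝒜, Disjoint E' (sSup (𝒜 \ {E'}))) ∧
      ∀ E' ∈ 𝒜, Module.Injective S ↥E' ∧
        ∃ L : Submodule S E, L ≤ E' ∧ IsRElem R L ∧
          ∀ N' : Submodule S E, N' ≤ E' → N' ≠ ⊥ → L ⊓ N' ≠ ⊥ := by
  obtain ⟨𝒜, h𝒜⟩ := exists_maximal_sSupIndep fun E' : Submodule S E =>
    Module.Injective S E' ∧ ∃ L, L.IsEssentialIn E' ∧ IsRElem R L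
  refine ⟨𝒜, ?_, h𝒜.1.1, fun E' hE' => ?_⟩
  · by_contra hF
    have := h𝒜.1.1.injective_sSup fun N hN => (h𝒜.1.2 N hN).1
    obtain ⟨E₀, L, hE₀, hLE₀, hL, hE₀F⟩ := exists_isRElem_injective_hull_disjoint (R := R) hF
    have hE₀𝒜 : E₀ ∉ 𝒜 := fun h => hL.1 (eq_bot_mono hLE₀.1 (hE₀F.eq_bot_of_le (le_sSup h)))
    refine hE₀𝒜 (h𝒜.2 ⟨h𝒜.1.1.insert hE₀F, ?_⟩ (Set.subset_insert _ _) (Set.mem_insert _ _))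
    rintro _ (rfl | hN)
    exacts [⟨hE₀, L, hLE₀, hL⟩, h𝒜.1.2 _ hN]
  · obtain ⟨hinj, L, hL, hLelem⟩ := h𝒜.1.2 E' hE'
    exact ⟨hinj, L, hL.1, hLelem, hL.2⟩
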